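/- In the block-structured Hadamard Response scheme, if X ∼ p over X = ∪_j X_j and Y is the channel output, then for each block j and x ∈ X_j: Pr(Y(1) = j, Y(2) ∈ S_x) = p(X_j)/2 + ((e^ε−1)/(2(e^ε+1)))·p_x, where p(X_j) = Σ_{x'∈X_j} p_{x'}. -/
import Mathlib


/-- Sylvester's construction of Hadamard matrices. -/
def sylvester : (n : ℕ) → Fin (2 ^ n) → Fin (2 ^ n) → ℤ
  | 0 => fun _ _ => 1
  | n + 1 => fun i j =>
      (if (i : ℕ) < 2 ^ n ∨ (j : ℕ) < 2 ^ n then 1 else -1) *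
        sylvester n ⟨(i : ℕ) % 2 ^ n, Nat.mod_lt _ (Nat.two_pow_pos n)⟩
          ⟨(j : ℕ) % 2 ^ n, Nat.mod_lt _ (Nat.two_pow_pos n)⟩

/-- The block-structured Hadamard-response channel: input `(j, i)` (element `i`
of block `j`, with `|X_j| = k j`) is mapped to an output `(j, i')` with
`i' ∈ [K_j]`, `K_j = 2^{⌈log₂(k_j+1)⌉}`, with probability `2e^ε/(K_j(1+e^ε))`
if `i'` lies in the `+1` set of Hadamard row `i+1` and `2/(K_j(1+e^ε))`
otherwise; outputs in other blocks have probability `0`. -/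
noncomputable def bsChannel (m : ℕ) (k : Fin m → ℕ) (ε : ℝ)
    (x : (j : Fin m) × Fin (k j))
    (y : (j : Fin m) × Fin (2 ^ Nat.clog 2 (k j + 1))) : ℝ :=
  if h : y.1 = x.1 then
    if sylvester (Nat.clog 2 (k x.1 + 1))
        ⟨(x.2 : ℕ) + 1, by
          have := Nat.le_pow_clog (b := 2) (by norm_num) (k x.1 + 1)
          have := x.2.isLt; omega⟩
        (Fin.cast (by rw [h]) y.2) = 1 then
      2 * Real.exp ε / ((2 ^ Nat.clog 2 (k x.1 + 1) : ℝ) * (1 + Real.exp ε))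
    else
      2 / ((2 ^ Nat.clog 2 (k x.1 + 1) : ℝ) * (1 + Real.exp ε))
  else 0

lemma sylvester_succ (n : ℕ) (r u : Fin (2 ^ (n + 1))) :
    sylvester (n + 1) r u =
      (if (r : ℕ) < 2 ^ n ∨ (u : ℕ) < 2 ^ n then 1 else -1) *
        sylvester n ⟨(r : ℕ) % 2 ^ n, Nat.mod_lt _ (Nat.two_pow_pos n)⟩
          ⟨(u : ℕ) % 2 ^ n, Nat.mod_lt _ (Nat.two_pow_pos n)⟩ := by
  rw [sylvester]

lemma sylvester_succ_lo (n : ℕ) (r : Fin (2 ^ (n + 1))) (v : Fin (2 ^ n)) :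
    sylvester (n + 1) r ⟨(v : ℕ), by have := v.isLt; have := Nat.two_pow_pos n; omega⟩ =
      sylvester n ⟨(r : ℕ) % 2 ^ n, Nat.mod_lt _ (Nat.two_pow_pos n)⟩ v := by
  rw [sylvester_succ]
  rw [if_pos (Or.inr v.isLt), one_mul]
  congr 1
  ext
  exact Nat.mod_eq_of_lt v.isLt

lemma sylvester_succ_hi (n : ℕ) (r : Fin (2 ^ (n + 1))) (v : Fin (2 ^ n)) :
    sylvester (n + 1) r ⟨2 ^ n + (v : ℕ), by have := v.isLt; omega⟩ =
      (if (r : ℕ) < 2 ^ n then 1 else -1) *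
        sylvester n ⟨(r : ℕ) % 2 ^ n, Nat.mod_lt _ (Nat.two_pow_pos n)⟩ v := by
  rw [sylvester_succ]
  congr 1
  · have h : ¬ (2 ^ n + (v : ℕ) < 2 ^ n) := by omega
    simp [h]
  · congr 1
    ext
    show (2 ^ n + (v : ℕ)) % 2 ^ n = (v : ℕ)
    rw [Nat.add_mod_left, Nat.mod_eq_of_lt v.isLt]


lemma sylvester_entry : ∀ (n : ℕ) (r u : Fin (2 ^ n)),
    sylvester n r u = 1 ∨ sylvester n r u = -1
  | 0, _, _ => Or.inl rfl
  | n + 1, r, u => by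
    rw [sylvester_succ]
    rcases sylvester_entry n ⟨(r : ℕ) % 2 ^ n, Nat.mod_lt _ (Nat.two_pow_pos n)⟩
        ⟨(u : ℕ) % 2 ^ n, Nat.mod_lt _ (Nat.two_pow_pos n)⟩ with h | h <;>
      rw [h] <;> split <;> norm_num

lemma sylvester_zero : ∀ (n : ℕ) (u : Fin (2 ^ n)),
    sylvester n ⟨0, Nat.two_pow_pos n⟩ u = 1
  | 0, _ => rfl
  | n + 1, u => by
    rw [sylvester_succ]
    rw [if_pos (Or.inl (Nat.two_pow_pos n))]
    simp only [Nat.zero_mod]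
    rw [sylvester_zero n]
    ring

lemma sum_split (n : ℕ) (g : Fin (2 ^ (n + 1)) → ℤ) :
    ∑ u, g u = (∑ v : Fin (2 ^ n), g ⟨(v : ℕ), by have := v.isLt; have := Nat.two_pow_pos n; omega⟩)
      + ∑ v : Fin (2 ^ n), g ⟨2 ^ n + (v : ℕ), by have := v.isLt; omega⟩ := by
  have h : 2 ^ (n + 1) = 2 ^ n + 2 ^ n := by rw [pow_succ]; ring
  rw [Fintype.sum_equiv (finCongr h) g (fun v => g (Fin.cast h.symm v)) (fun u => by simp)]
  rw [Fin.sum_univ_add]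
  congr 1

lemma sylvester_ortho : ∀ (n : ℕ) (r r' : Fin (2 ^ n)),
    ∑ u, sylvester n r u * sylvester n r' u = if r = r' then (2 ^ n : ℤ) else 0
  | 0, r, r' => by
    have h1 : (r : ℕ) < 1 := by simpa using r.isLt
    have h2 : (r' : ℕ) < 1 := by simpa using r'.isLt
    have h : r = r' := Fin.ext (by omega)
    simp [h, sylvester]
  | n + 1, r, r' => by
    have hpos := Nat.two_pow_pos n
    rw [sum_split n (fun u => sylvester (n+1) r u * sylvester (n+1) r' u)]
    simp only [sylvester_succ_lo, sylvester_succ_hi]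
    have e2 : (∑ v : Fin (2 ^ n),
        ((if (r : ℕ) < 2 ^ n then 1 else -1) * sylvester n ⟨(r : ℕ) % 2 ^ n, Nat.mod_lt _ hpos⟩ v) *
        ((if (r' : ℕ) < 2 ^ n then 1 else -1) * sylvester n ⟨(r' : ℕ) % 2 ^ n, Nat.mod_lt _ hpos⟩ v)) =
        ((if (r : ℕ) < 2 ^ n then 1 else -1) * (if (r' : ℕ) < 2 ^ n then 1 else -1)) *
        ∑ v : Fin (2 ^ n), sylvester n ⟨(r : ℕ) % 2 ^ n, Nat.mod_lt _ hpos⟩ v *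
          sylvester n ⟨(r' : ℕ) % 2 ^ n, Nat.mod_lt _ hpos⟩ v := by
      rw [Finset.mul_sum]; apply Finset.sum_congr rfl; intro v _; ring
    rw [e2, sylvester_ortho n ⟨(r : ℕ) % 2 ^ n, Nat.mod_lt _ hpos⟩ ⟨(r' : ℕ) % 2 ^ n, Nat.mod_lt _ hpos⟩]
    have hr2 : (r : ℕ) < 2 ^ n + 2 ^ n := lt_of_lt_of_eq r.isLt (by ring)
    have hr2' : (r' : ℕ) < 2 ^ n + 2 ^ n := lt_of_lt_of_eq r'.isLt (by ring)
    by_cases hrr : r = r'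
    · subst hrr
      rw [if_pos rfl, if_pos rfl, show ((2:ℤ) ^ (n+1)) = 2 ^ n + 2 ^ n from by ring]
      split <;> ring
    · rw [if_neg hrr]
      by_cases hRR : ((r : ℕ) % 2 ^ n) = ((r' : ℕ) % 2 ^ n)
      · rw [if_pos (Fin.ext hRR)]
        have hvne : (r : ℕ) ≠ (r' : ℕ) := fun h => hrr (Fin.val_injective h)
        rcases lt_or_ge (r : ℕ) (2 ^ n) with h1 | h1 <;>
          rcases lt_or_ge (r' : ℕ) (2 ^ n) with h2 | h2
        · exact absurd (by rwa [Nat.mod_eq_of_lt h1, Nat.mod_eq_of_lt h2] at hRR) hvne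
        · rw [if_pos h1, if_neg (not_lt.2 h2)]; ring
        · rw [if_neg (not_lt.2 h1), if_pos h2]; ring
        · exfalso
          have hm1 : (r : ℕ) % 2 ^ n = (r : ℕ) - 2 ^ n := by
            rw [Nat.mod_eq_sub_mod h1, Nat.mod_eq_of_lt (by omega)]
          have hm2 : (r' : ℕ) % 2 ^ n = (r' : ℕ) - 2 ^ n := by
            rw [Nat.mod_eq_sub_mod h2, Nat.mod_eq_of_lt (by omega)]
          omega
      · rw [if_neg (fun h => hRR (congrArg Fin.val h))]; ring

lemma sylvester_row_sum (n : ℕ) (r : Fin (2 ^ n)) (hr : (r : ℕ) ≠ 0) :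
    ∑ u, sylvester n r u = 0 := by
  have h := sylvester_ortho n r ⟨0, Nat.two_pow_pos n⟩
  rw [if_neg (fun h' => hr (congrArg Fin.val h'))] at h
  rw [← h]
  apply Finset.sum_congr rfl
  intro u _
  rw [sylvester_zero, mul_one]

lemma two_mul_card (n : ℕ) (r : Fin (2 ^ n)) (hr : (r : ℕ) ≠ 0) :
    2 * ((Finset.univ.filter (fun u => sylvester n r u = 1)).card : ℤ) = 2 ^ n := by
  have h1 : ((Finset.univ.filter (fun u => sylvester n r u = 1)).card : ℤ)
      = ∑ u, (if sylvester n r u = 1 then (1 : ℤ) else 0) := by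
    rw [Finset.card_filter]
    push_cast
    rfl
  rw [h1, Finset.mul_sum]
  have h2 : ∀ u, 2 * (if sylvester n r u = 1 then (1 : ℤ) else 0) = 1 + sylvester n r u := by
    intro u
    rcases sylvester_entry n r u with h | h <;> rw [h] <;> norm_num
  rw [Finset.sum_congr rfl (fun u _ => h2 u), Finset.sum_add_distrib,
    sylvester_row_sum n r hr]
  simp [Finset.card_univ]

lemma four_mul_card (n : ℕ) (r r' : Fin (2 ^ n)) (hr : (r : ℕ) ≠ 0) (hr' : (r' : ℕ) ≠ 0)
    (hne : r ≠ r') :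
    4 * ((Finset.univ.filter
        (fun u => sylvester n r u = 1 ∧ sylvester n r' u = 1)).card : ℤ) = 2 ^ n := by
  have h1 : ((Finset.univ.filter (fun u => sylvester n r u = 1 ∧ sylvester n r' u = 1)).card : ℤ)
      = ∑ u, (if sylvester n r u = 1 ∧ sylvester n r' u = 1 then (1 : ℤ) else 0) := by
    rw [Finset.card_filter]
    push_cast
    rfl
  rw [h1, Finset.mul_sum]
  have h2 : ∀ u, 4 * (if sylvester n r u = 1 ∧ sylvester n r' u = 1 then (1 : ℤ) else 0)
      = 1 + sylvester n r u + sylvester n r' u + sylvester n r u * sylvester n r' u := by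
    intro u
    rcases sylvester_entry n r u with h | h <;> rcases sylvester_entry n r' u with h' | h' <;>
      rw [h, h'] <;> norm_num
  rw [Finset.sum_congr rfl (fun u _ => h2 u)]
  rw [Finset.sum_add_distrib, Finset.sum_add_distrib, Finset.sum_add_distrib,
    sylvester_row_sum n r hr, sylvester_row_sum n r' hr',
    sylvester_ortho n r r', if_neg hne]
  simp [Finset.card_univ]

/-- Output-event probabilities of the block-structured Hadamard-response
scheme: for every block `j` and `x = (j,i)`,
`Pr(Y(1) = j, Y(2) ∈ S_x) = p(X_j)/2 + ((e^ε-1)/(2(e^ε+1))) p_x`. -/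
theorem bsChannel_output_probs (m : ℕ) (k : Fin m → ℕ) (hk : ∀ j, 0 < k j)
    (ε : ℝ) (hε : 0 < ε)
    (p : ((j : Fin m) × Fin (k j)) → ℝ) (hp0 : ∀ x, 0 ≤ p x) (hp1 : ∑ x, p x = 1)
    (j : Fin m) (i : Fin (k j)) :
    (∑ u ∈ Finset.univ.filter (fun u : Fin (2 ^ Nat.clog 2 (k j + 1)) =>
          sylvester (Nat.clog 2 (k j + 1))
            ⟨(i : ℕ) + 1, by
              have := Nat.le_pow_clog (b := 2) (by norm_num) (k j + 1)
              have := i.isLt; omega⟩ u = 1),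
        ∑ x, p x * bsChannel m k ε x ⟨j, u⟩)
      = (∑ i' : Fin (k j), p ⟨j, i'⟩) / 2
        + (Real.exp ε - 1) / (2 * (Real.exp ε + 1)) * p ⟨j, i⟩ := by
  classical
  have hK := Nat.le_pow_clog (b := 2) (by norm_num) (k j + 1)
  set N := Nat.clog 2 (k j + 1) with hN
  have hrowlt : ∀ i' : Fin (k j), (i' : ℕ) + 1 < 2 ^ N := by
    intro i'; have := i'.isLt; omega
  set E := Real.exp ε with hE
  have hE0 : 0 < E := Real.exp_pos ε
  have hE1 : (1 : ℝ) + E ≠ 0 := by positivity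
  have hKpos : (0 : ℝ) < (2 ^ N : ℝ) := by positivity
  set A := 2 * E / ((2 ^ N : ℝ) * (1 + E)) with hA
  set B := 2 / ((2 ^ N : ℝ) * (1 + E)) with hB
  set row : Fin (k j) → Fin (2 ^ N) := fun i' => ⟨(i' : ℕ) + 1, hrowlt i'⟩ with hrow
  set S : Finset (Fin (2 ^ N)) :=
    Finset.univ.filter (fun u => sylvester N (row i) u = 1) with hS
  show (∑ u ∈ S, ∑ x, p x * bsChannel m k ε x ⟨j, u⟩) = _
  -- channel evaluation within block j
  have hch : ∀ (i' : Fin (k j)) (u : Fin (2 ^ N)),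
      bsChannel m k ε ⟨j, i'⟩ ⟨j, u⟩ =
        if sylvester N (row i') u = 1 then A else B := by
    intro i' u
    unfold bsChannel
    rw [dif_pos rfl]
    rfl
  have hch0 : ∀ (j' : Fin m) (i' : Fin (k j')) (u : Fin (2 ^ N)),
      j' ≠ j → bsChannel m k ε ⟨j', i'⟩ ⟨j, u⟩ = 0 := by
    intro j' i' u hne
    unfold bsChannel
    rw [dif_neg (fun h => hne (h.symm))]
  rw [Finset.sum_comm]
  rw [← Finset.univ_sigma_univ, Finset.sum_sigma]
  rw [Finset.sum_eq_single j (fun j' _ hne => by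
      apply Finset.sum_eq_zero; intro i' _
      apply Finset.sum_eq_zero; intro u _
      rw [hch0 j' i' u hne, mul_zero])
    (fun h => absurd (Finset.mem_univ j) h)]
  -- now a single block
  have hT : ∀ i' : Fin (k j), (∑ u ∈ S, (if sylvester N (row i') u = 1 then A else B))
      = if i' = i then E / (1 + E) else 1 / 2 := by
    intro i'
    have hcardS : (2 : ℝ) * (S.card : ℝ) = (2 ^ N : ℝ) := by
      have := two_mul_card N (row i) (by simp [hrow])
      exact_mod_cast this
    have step : (∑ u ∈ S, (if sylvester N (row i') u = 1 then A else B))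
        = (S.card : ℝ) * B +
          ((S.filter (fun u => sylvester N (row i') u = 1)).card : ℝ) * (A - B) := by
      have : ∀ u, (if sylvester N (row i') u = 1 then A else B)
          = B + (if sylvester N (row i') u = 1 then A - B else 0) := by
        intro u; split <;> ring
      rw [Finset.sum_congr rfl (fun u _ => this u), Finset.sum_add_distrib,
        Finset.sum_const, ← Finset.sum_filter, Finset.sum_const]
      simp [nsmul_eq_mul]
    rw [step]
    by_cases hii : i' = i
    · subst hii
      have : S.filter (fun u => sylvester N (row i') u = 1) = S := by
        rw [hS, Finset.filter_filter]
        simp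
      rw [this, if_pos rfl]
      have hc : (S.card : ℝ) = (2 ^ N : ℝ) / 2 := by linarith
      rw [hc, hA, hB]
      field_simp
      ring
    · rw [if_neg hii]
      have hcard2 : (4 : ℝ) *
          ((S.filter (fun u => sylvester N (row i') u = 1)).card : ℝ) = (2 ^ N : ℝ) := by
        have hne : row i ≠ row i' := by
          intro h
          apply hii
          have := congrArg Fin.val h
          simp [hrow] at this
          exact (Fin.val_injective this.symm)
        have := four_mul_card N (row i) (row i') (by simp [hrow]) (by simp [hrow]) hne
        rw [hS, Finset.filter_filter]
        exact_mod_cast this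
      have hc : (S.card : ℝ) = (2 ^ N : ℝ) / 2 := by linarith
      have hd : ((S.filter (fun u => sylvester N (row i') u = 1)).card : ℝ)
          = (2 ^ N : ℝ) / 4 := by linarith
      rw [hc, hd, hA, hB]
      field_simp
      ring
  -- assemble
  calc ∑ i' : Fin (k j), ∑ u ∈ S, p ⟨j, i'⟩ * bsChannel m k ε ⟨j, i'⟩ ⟨j, u⟩
      = ∑ i' : Fin (k j), p ⟨j, i'⟩ * (if i' = i then E / (1 + E) else 1 / 2) := by
        apply Finset.sum_congr rfl; intro i' _
        rw [← Finset.mul_sum]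
        congr 1
        rw [← hT i']
        exact Finset.sum_congr rfl (fun u _ => by rw [hch])
    _ = ∑ i' : Fin (k j), (p ⟨j, i'⟩ * (1 / 2)
          + if i' = i then p ⟨j, i⟩ * (E / (1 + E) - 1 / 2) else 0) := by
        apply Finset.sum_congr rfl; intro i' _
        by_cases hii : i' = i
        · subst hii; simp; ring
        · simp [hii]
    _ = (∑ i' : Fin (k j), p ⟨j, i'⟩) / 2
        + (E - 1) / (2 * (E + 1)) * p ⟨j, i⟩ := by
        rw [Finset.sum_add_distrib, Finset.sum_ite_eq' Finset.univ i]
        simp only [Finset.mem_univ, if_pos]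
        have h1 : (∑ x : Fin (k j), p ⟨j, x⟩ * (1 / 2))
            = (∑ i' : Fin (k j), p ⟨j, i'⟩) / 2 := by
          rw [Finset.sum_div]
          exact Finset.sum_congr rfl (fun x _ => by ring)
        have h2 : E / (1 + E) - 1 / 2 = (E - 1) / (2 * (E + 1)) := by
          rw [div_sub_div _ _ hE1 (by norm_num), div_eq_div_iff (by positivity) (by positivity)]
          ring
        rw [h1, h2]
        ring
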